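/- For every irrational real number α one has 𝔨*(α) ≥ 1/2, and there exists an irrational β with 𝔨*(β) = 1/2 (for instance β = [0; b_1, 2, b_2, 2, b_3, 2, …] for any sequence of positive integers b_j with b_j → ∞). In particular, 1/2 is the minimal element of the spectrum 𝕃₂* = {𝔨*(α) : α irrational}. -/

import Mathlib

open Filter Real Set

/-- Iterates of the Gauss map starting from `α`: `x₀ = α`, `x_{n+1} = 1 / fract (xₙ)`. -/
noncomputable def gaussIter (α : ℝ) : ℕ → ℝ
  | 0 => α
  | n + 1 => (Int.fract (gaussIter α n))⁻¹

/-- Partial quotients of the continued fraction `α = [a₀; a₁, a₂, …]`. -/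
noncomputable def cfA (α : ℝ) (n : ℕ) : ℤ := ⌊gaussIter α n⌋

/-- Denominators of convergents, with shifted index: `cfQ α 0 = q₋₁ = 0`,
`cfQ α 1 = q₀ = 1`, and `cfQ α (n+1) = qₙ` where `qₙ = aₙ q_{n-1} + q_{n-2}`. -/
noncomputable def cfQ (α : ℝ) : ℕ → ℤ
  | 0 => 0
  | 1 => 1
  | n + 2 => cfA α (n + 1) * cfQ α (n + 1) + cfQ α n

/-- Numerators of convergents, with shifted index: `cfP α 0 = p₋₁ = 1`,
`cfP α 1 = p₀ = ⌊α⌋`, and `cfP α (n+1) = pₙ` where `pₙ = aₙ p_{n-1} + p_{n-2}`. -/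
noncomputable def cfP (α : ℝ) : ℕ → ℤ
  | 0 => 1
  | 1 => ⌊α⌋
  | n + 2 => cfA α (n + 1) * cfP α (n + 1) + cfP α n

/-- `qₙ`, the denominator of the `n`-th convergent of `α`. -/
noncomputable def cfDen (α : ℝ) (n : ℕ) : ℤ := cfQ α (n + 1)

/-- `pₙ`, the numerator of the `n`-th convergent of `α`. -/
noncomputable def cfNum (α : ℝ) (n : ℕ) : ℤ := cfP α (n + 1)

/-- `ξₙ = |qₙ α − pₙ|`. -/
noncomputable def cfXi (α : ℝ) (n : ℕ) : ℝ := |(cfDen α n : ℝ) * α - (cfNum α n : ℝ)|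

/-- `ψ_α(t) = min { ‖qα‖ : q ∈ ℤ, 1 ≤ q ≤ t }`. -/
noncomputable def psiFn (α t : ℝ) : ℝ :=
  sInf {x : ℝ | ∃ p q : ℤ, 1 ≤ q ∧ (q : ℝ) ≤ t ∧ x = |(q : ℝ) * α - (p : ℝ)|}

/-- `ψ_α^[2](t)`: the same minimum but over pairs `(p,q)` that are not `(pₙ,qₙ)` for any `n ≥ 0`. -/
noncomputable def psi2Fn (α t : ℝ) : ℝ :=
  sInf {x : ℝ | ∃ p q : ℤ, 1 ≤ q ∧ (q : ℝ) ≤ t ∧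
    (∀ n : ℕ, ¬(p = cfNum α n ∧ q = cfDen α n)) ∧ x = |(q : ℝ) * α - (p : ℝ)|}

/-- `ψ_α^[2]*(t)`: the same minimum but over pairs `(p,q)` with `p/q ≠ pₙ/qₙ` for all `n ≥ 0`. -/
noncomputable def psi2sFn (α t : ℝ) : ℝ :=
  sInf {x : ℝ | ∃ p q : ℤ, 1 ≤ q ∧ (q : ℝ) ≤ t ∧
    (∀ n : ℕ, (p : ℝ) / (q : ℝ) ≠ (cfNum α n : ℝ) / (cfDen α n : ℝ)) ∧
    x = |(q : ℝ) * α - (p : ℝ)|}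

/-- `λ(α) = liminf_{t→∞} t · ψ_α(t)`. -/
noncomputable def lamOf (α : ℝ) : ℝ := Filter.liminf (fun t : ℝ => t * psiFn α t) Filter.atTop

/-- `𝔨(α) = liminf_{t→∞} t · ψ_α^[2](t)`. -/
noncomputable def kOf (α : ℝ) : ℝ := Filter.liminf (fun t : ℝ => t * psi2Fn α t) Filter.atTop

/-- `𝔨*(α) = liminf_{t→∞} t · ψ_α^[2]*(t)`. -/
noncomputable def ksOf (α : ℝ) : ℝ := Filter.liminf (fun t : ℝ => t * psi2sFn α t) Filter.atTop

/-- `α` and `β` are equivalent: `β = (aα+b)/(cα+d)` with `a,b,c,d ∈ ℤ`, `|ad − bc| = 1`. -/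
def CFEquiv (α β : ℝ) : Prop :=
  ∃ a b c d : ℤ, |a * d - b * c| = 1 ∧ β = ((a : ℝ) * α + (b : ℝ)) / ((c : ℝ) * α + (d : ℝ))

/-- The spectrum `𝕃₂ = {𝔨(α) : α irrational}`. -/
def L2 : Set ℝ := {x : ℝ | ∃ α : ℝ, Irrational α ∧ kOf α = x}

/-- The spectrum `𝕃₂* = {𝔨*(α) : α irrational}`. -/
def L2s : Set ℝ := {x : ℝ | ∃ α : ℝ, Irrational α ∧ ksOf α = x}

/-- `𝔔(α)`: the set of positive integers at which `ψ_α^[2]` is discontinuous. -/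
def QSet (α : ℝ) : Set ℤ := {m : ℤ | 0 < m ∧ ¬ ContinuousAt (psi2Fn α) (m : ℝ)}

/-- `𝔛(α)`: the set of positive integers at which `ψ_α^[2]*` is discontinuous. -/
def XSet (α : ℝ) : Set ℤ := {m : ℤ | 0 < m ∧ ¬ ContinuousAt (psi2sFn α) (m : ℝ)}

/-- The members of the list `l` are successive elements of `S`: they belong to `S`,
are listed in increasing order, and no element of `S` lies strictly between
consecutive listed ones. -/
def SuccessiveIn (S : Set ℤ) (l : List ℤ) : Prop :=
  (∀ x ∈ l, x ∈ S) ∧ l.Chain' (fun x y => x < y ∧ ∀ z ∈ S, ¬(x < z ∧ z < y))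

/-- `κ¹ₙ = (q_{n-2} + q_{n-1})(ξ_{n-2} − ξ_{n-1})`. -/
noncomputable def kap1 (α : ℝ) (n : ℕ) : ℝ :=
  ((cfDen α (n - 2) + cfDen α (n - 1) : ℤ) : ℝ) * (cfXi α (n - 2) - cfXi α (n - 1))

/-- `κ²ₙ = (qₙ − q_{n-1})(ξ_{n-1} + ξₙ)`. -/
noncomputable def kap2 (α : ℝ) (n : ℕ) : ℝ :=
  ((cfDen α n - cfDen α (n - 1) : ℤ) : ℝ) * (cfXi α (n - 1) + cfXi α n)

/-- `κ³ₙ = (2q_{n-2} + q_{n-1})(2ξ_{n-2} − ξ_{n-1})`. -/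
noncomputable def kap3 (α : ℝ) (n : ℕ) : ℝ :=
  ((2 * cfDen α (n - 2) + cfDen α (n - 1) : ℤ) : ℝ) * (2 * cfXi α (n - 2) - cfXi α (n - 1))

/-- `κ⁴ₙ = 4 q_{n-1} ξ_{n-1}`. -/
noncomputable def kap4 (α : ℝ) (n : ℕ) : ℝ :=
  ((4 * cfDen α (n - 1) : ℤ) : ℝ) * cfXi α (n - 1)


/-!
If `p / q` is not a convergent of `α`, Legendre's theorem gives `|q α - p| ≥ 1 / (2 q)`, so
`t ψ(t) ≥ 1 / 2` for `t ≥ 1`. This bounds the real-valued liminf only once it is known to be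
finite: the semiconvergent `(p_{n+1} + k pₙ) / (q_{n+1} + k qₙ)`, with `k = 1`, or `k = 2` when
`a_{n+2} = 1`, is reduced, has its denominator strictly between two consecutive `qₘ` (so it is
not a convergent), and satisfies `q |q α - p| ≤ (k + 1)²`.

If `a_{n+2} = 2`, the error of the mediant (`k = 1`) is `e_{n+2} - e_{n+1}`, where
`eₘ = qₘ α - pₘ`, and `|eₘ| ≤ 1 / q_{m+1}` bounds `q |q α - p|` by
`1 / 2 + 1 / (2 a_{n+1}) + 1 / a_{n+3}`. Hence `𝔨*(α) = 1 / 2` whenever blocks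
`a_{n+1}, 2, a_{n+3}` with `a_{n+1}, a_{n+3}` arbitrarily large occur infinitely often. A number
with such partial quotients is a limit of finite continued fractions; it is irrational because
for `α = u / v` the nonzero `|qₙ α - pₙ| ≥ 1 / v` cannot stay below `1 / q_{n+1}`.
-/

section Expansion

variable {α : ℝ}

theorem gaussIter_succ (α : ℝ) (n : ℕ) :
    gaussIter α (n + 1) = (Int.fract (gaussIter α n))⁻¹ := rfl

theorem gaussIter_succ' (α : ℝ) (n : ℕ) :
    gaussIter α (n + 1) = gaussIter (Int.fract α)⁻¹ n := by
  induction n with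
  | zero => rfl
  | succ n ih => rw [gaussIter_succ, ih, ← gaussIter_succ]

theorem cfA_succ' (α : ℝ) (n : ℕ) : cfA α (n + 1) = cfA (Int.fract α)⁻¹ n := by
  rw [cfA, cfA, gaussIter_succ']

theorem cfQ_add_two (α : ℝ) (n : ℕ) :
    cfQ α (n + 2) = cfA α (n + 1) * cfQ α (n + 1) + cfQ α n := rfl

theorem cfP_add_two (α : ℝ) (n : ℕ) :
    cfP α (n + 2) = cfA α (n + 1) * cfP α (n + 1) + cfP α n := rfl

theorem cfDen_succ (α : ℝ) (n : ℕ) :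
    cfDen α (n + 1) = cfA α (n + 1) * cfDen α n + cfQ α n := rfl

theorem cfDen_add_two (α : ℝ) (n : ℕ) :
    cfDen α (n + 2) = cfA α (n + 2) * cfDen α (n + 1) + cfDen α n := rfl

theorem cfP_mul_cfQ_sub_cfP_mul_cfQ (α : ℝ) (n : ℕ) :
    cfP α (n + 1) * cfQ α n - cfP α n * cfQ α (n + 1) = (-1) ^ (n + 1) := by
  induction n with
  | zero => simp [cfP, cfQ]
  | succ n ih =>
    rw [cfP_add_two, cfQ_add_two, pow_succ]
    linear_combination -ih

theorem cfNum_mul_cfDen_sub_cfNum_mul_cfDen (α : ℝ) (n : ℕ) :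
    cfNum α (n + 1) * cfDen α n - cfNum α n * cfDen α (n + 1) = (-1) ^ n := by
  have h := cfP_mul_cfQ_sub_cfP_mul_cfQ α (n + 1)
  rw [pow_succ, pow_succ] at h
  simp only [cfNum, cfDen]
  linear_combination h

theorem isCoprime_of_mul_add_mul_eq_neg_one_pow {a b u v : ℤ} {n : ℕ}
    (h : u * a + v * b = (-1) ^ n) : IsCoprime a b :=
  ⟨(-1) ^ n * u, (-1) ^ n * v, by
    rw [mul_assoc, mul_assoc, ← mul_add, h, ← mul_pow, neg_one_mul, neg_neg, one_pow]⟩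

theorem isCoprime_cfNum_cfDen (α : ℝ) (n : ℕ) : IsCoprime (cfNum α n) (cfDen α n) :=
  isCoprime_of_mul_add_mul_eq_neg_one_pow (u := -cfDen α (n + 1)) (v := cfNum α (n + 1))
    (by linear_combination cfNum_mul_cfDen_sub_cfNum_mul_cfDen α n)

/-- The continued fraction expansion of `α` does not terminate. -/
def InfiniteExpansion (α : ℝ) : Prop := ∀ n, Int.fract (gaussIter α n) ≠ 0

theorem Irrational.infiniteExpansion (hα : Irrational α) : InfiniteExpansion α := by
  intro n
  have hirr : Irrational (gaussIter α n) := by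
    induction n with
    | zero => exact hα
    | succ n ih =>
      rw [gaussIter_succ, ← Int.self_sub_floor]
      exact (ih.sub_intCast _).inv
  exact Int.fract_ne_zero_iff.mpr fun ⟨m, hm⟩ => hirr.ne_int m hm.symm

theorem InfiniteExpansion.fract_inv (hα : InfiniteExpansion α) :
    InfiniteExpansion (Int.fract α)⁻¹ := fun n => gaussIter_succ' α n ▸ hα (n + 1)

theorem fract_gaussIter_pos (hα : InfiniteExpansion α) (n : ℕ) :
    0 < Int.fract (gaussIter α n) :=
  (Int.fract_nonneg _).lt_of_ne' (hα n)

theorem one_lt_gaussIter_succ (hα : InfiniteExpansion α) (n : ℕ) : 1 < gaussIter α (n + 1) :=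
  one_lt_inv_iff₀.mpr ⟨fract_gaussIter_pos hα n, Int.fract_lt_one _⟩

theorem one_le_cfA_succ (hα : InfiniteExpansion α) (n : ℕ) : 1 ≤ cfA α (n + 1) :=
  Int.le_floor.mpr (by exact_mod_cast (one_lt_gaussIter_succ hα n).le)

theorem one_le_cfDen (hα : InfiniteExpansion α) : ∀ n, 1 ≤ cfDen α n
  | 0 => le_rfl
  | 1 => by simpa [cfDen, cfQ] using one_le_cfA_succ hα 0
  | n + 2 => by
    have := one_le_cfA_succ hα (n + 1)
    have := one_le_cfDen hα (n + 1)
    have := one_le_cfDen hα n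
    rw [cfDen_add_two]
    nlinarith

theorem cfQ_nonneg (hα : InfiniteExpansion α) : ∀ n, 0 ≤ cfQ α n
  | 0 => le_rfl
  | n + 1 => zero_le_one.trans (one_le_cfDen hα n)

theorem cfA_mul_cfDen_le (hα : InfiniteExpansion α) (n : ℕ) :
    cfA α (n + 1) * cfDen α n ≤ cfDen α (n + 1) := by
  rw [cfDen_succ]
  linarith [cfQ_nonneg hα n]

theorem cfDen_add_cfDen_le (hα : InfiniteExpansion α) (n : ℕ) :
    cfDen α n + cfDen α (n + 1) ≤ cfDen α (n + 2) := by
  have := one_le_cfA_succ hα (n + 1)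
  have := one_le_cfDen hα (n + 1)
  rw [cfDen_add_two]
  nlinarith

theorem cfDen_mono (hα : InfiniteExpansion α) : Monotone (cfDen α) := by
  refine monotone_nat_of_le_succ fun n => ?_
  have := one_le_cfA_succ hα n
  have := one_le_cfDen hα n
  nlinarith [cfA_mul_cfDen_le hα n]

theorem cfDen_lt_cfDen_succ (hα : InfiniteExpansion α) {n : ℕ} (hn : n ≠ 0) :
    cfDen α n < cfDen α (n + 1) := by
  obtain ⟨m, rfl⟩ := Nat.exists_eq_succ_of_ne_zero hn
  linarith [cfDen_add_cfDen_le hα m, one_le_cfDen hα m]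

theorem le_cfDen (hα : InfiniteExpansion α) : ∀ n : ℕ, (n : ℤ) ≤ cfDen α n
  | 0 => zero_le_one
  | 1 => one_le_cfDen hα 1
  | n + 2 => by
    have := le_cfDen hα (n + 1)
    have : cfDen α (n + 1) < cfDen α (n + 2) := cfDen_lt_cfDen_succ hα n.succ_ne_zero
    push_cast at *
    omega

end Expansion

section Approximation

variable {α : ℝ}

/-- `cfErr α (n + 1) = qₙ α - pₙ`, matching the shifted indexing of `cfQ` and `cfP`. -/
noncomputable def cfErr (α : ℝ) (n : ℕ) : ℝ := cfQ α n * α - cfP α n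

theorem cfXi_eq_abs_cfErr (α : ℝ) (n : ℕ) : cfXi α n = |cfErr α (n + 1)| := rfl

theorem cfErr_add_two (α : ℝ) (n : ℕ) :
    cfErr α (n + 2) = cfA α (n + 1) * cfErr α (n + 1) + cfErr α n := by
  simp only [cfErr, cfQ_add_two, cfP_add_two]
  push_cast
  ring

theorem cfErr_succ (hα : InfiniteExpansion α) (n : ℕ) :
    cfErr α (n + 1) = -Int.fract (gaussIter α n) * cfErr α n := by
  induction n with
  | zero => simp [cfErr, cfQ, cfP, gaussIter, ← Int.self_sub_floor]
  | succ n ih =>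
    have ha : (cfA α (n + 1) : ℝ) =
        (Int.fract (gaussIter α n))⁻¹ - Int.fract (gaussIter α (n + 1)) := by
      rw [cfA, ← gaussIter_succ, Int.self_sub_fract]
    have := hα n
    rw [cfErr_add_two, ha, ih]
    field_simp
    ring

theorem cfErr_mul_eq (hα : InfiniteExpansion α) (n : ℕ) :
    cfErr α (n + 1) * (cfDen α n * gaussIter α (n + 1) + cfQ α n) = (-1) ^ n := by
  have hdet :
      (cfQ α (n + 1) : ℝ) * cfErr α n - cfQ α n * cfErr α (n + 1) = (-1) ^ (n + 1) := by
    have := congrArg (Int.cast : ℤ → ℝ) (cfP_mul_cfQ_sub_cfP_mul_cfQ α n)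
    push_cast at this
    simp only [cfErr]
    linear_combination this
  have hE : cfErr α n = -gaussIter α (n + 1) * cfErr α (n + 1) := by
    rw [cfErr_succ hα, gaussIter_succ]
    field_simp [hα n]
  rw [hE, pow_succ] at hdet
  simp only [cfDen]
  linear_combination -hdet

theorem cfXi_mul (hα : InfiniteExpansion α) (n : ℕ) :
    cfXi α n * (cfDen α n * gaussIter α (n + 1) + cfQ α n) = 1 := by
  have hpos : 0 ≤ (cfDen α n : ℝ) * gaussIter α (n + 1) + cfQ α n := by
    have : (1 : ℝ) ≤ cfDen α n := by exact_mod_cast one_le_cfDen hα n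
    have : (0 : ℝ) ≤ cfQ α n := by exact_mod_cast cfQ_nonneg hα n
    have := one_lt_gaussIter_succ hα n
    positivity
  have h := congrArg abs (cfErr_mul_eq hα n)
  rwa [abs_mul, abs_of_nonneg hpos, abs_neg_one_pow] at h

theorem cfXi_pos (hα : InfiniteExpansion α) (n : ℕ) : 0 < cfXi α n := by
  have h₁ := cfXi_mul hα n
  refine lt_of_le_of_ne (abs_nonneg _) fun h => ?_
  rw [← h, zero_mul] at h₁
  exact zero_ne_one h₁

theorem cfXi_mul_cfDen_succ_le_one (hα : InfiniteExpansion α) (n : ℕ) :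
    cfXi α n * cfDen α (n + 1) ≤ 1 := by
  have hq : (0 : ℝ) ≤ cfDen α n := by exact_mod_cast zero_le_one.trans (one_le_cfDen hα n)
  calc cfXi α n * cfDen α (n + 1) = cfXi α n * (cfA α (n + 1) * cfDen α n + cfQ α n) := by
        rw [cfDen_succ]; push_cast; ring
    _ ≤ cfXi α n * (cfDen α n * gaussIter α (n + 1) + cfQ α n) := by
        have : (cfA α (n + 1) : ℝ) * cfDen α n ≤ cfDen α n * gaussIter α (n + 1) := by
          rw [mul_comm]
          exact mul_le_mul_of_nonneg_left (Int.floor_le _) hq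
        have := (cfXi_pos hα n).le
        gcongr
    _ = 1 := cfXi_mul hα n

theorem cfP_succ_cfQ_succ_fract_inv (α : ℝ) : ∀ n : ℕ,
    cfP α (n + 1) = ⌊α⌋ * cfP (Int.fract α)⁻¹ n + cfQ (Int.fract α)⁻¹ n ∧
      cfQ α (n + 1) = cfP (Int.fract α)⁻¹ n
  | 0 => by simp [cfP, cfQ]
  | 1 => by simp [cfP, cfQ, cfA, gaussIter]; ring
  | n + 2 => by
    obtain ⟨hP₁, hQ₁⟩ := cfP_succ_cfQ_succ_fract_inv α (n + 1)
    obtain ⟨hP₀, hQ₀⟩ := cfP_succ_cfQ_succ_fract_inv α n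
    rw [cfP_add_two α (n + 1), cfQ_add_two α (n + 1), cfA_succ', hP₁, hQ₁, hP₀, hQ₀,
      cfP_add_two (Int.fract α)⁻¹ n, cfQ_add_two (Int.fract α)⁻¹ n]
    constructor <;> ring

theorem convergent_eq_cfNum_div_cfDen : ∀ (n : ℕ) {α : ℝ}, InfiniteExpansion α →
    (α.convergent n : ℝ) = cfNum α n / cfDen α n
  | 0, α, _ => by simp [cfNum, cfDen, cfP, cfQ]
  | n + 1, α, hα => by
    obtain ⟨hP, hQ⟩ := cfP_succ_cfQ_succ_fract_inv α (n + 1)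
    have hp : (cfP (Int.fract α)⁻¹ (n + 1) : ℝ) ≠ 0 := by
      have := one_le_cfDen hα (n + 1)
      rw [cfDen, hQ] at this
      exact_mod_cast (by omega : cfP (Int.fract α)⁻¹ (n + 1) ≠ 0)
    rw [Real.convergent_succ]
    push_cast
    rw [convergent_eq_cfNum_div_cfDen n hα.fract_inv, inv_div]
    simp only [cfNum, cfDen]
    rw [hP, hQ]
    push_cast
    rw [add_div, mul_div_cancel_right₀ _ hp]

/-- Compared as real numbers, so `p / q` need not be reduced. -/
def NotConvergent (α : ℝ) (p q : ℤ) : Prop :=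
  ∀ n : ℕ, (p : ℝ) / (q : ℝ) ≠ (cfNum α n : ℝ) / (cfDen α n : ℝ)

theorem one_div_two_mul_le_abs_sub (hα : InfiniteExpansion α) {p q : ℤ} (hq : 0 < q)
    (h : NotConvergent α p q) : 1 / (2 * q) ≤ |q * α - p| := by
  by_contra! hlt
  set r : ℚ := p / q with hr_def
  have hq' : (0 : ℝ) < q := by exact_mod_cast hq
  have hr : (r : ℝ) = p / q := by push_cast [r]; rfl
  have hden : (r.den : ℝ) ≤ q := by
    have : (r.den : ℤ) ∣ q := by
      rw [hr_def, ← Rat.divInt_eq_div]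
      exact Rat.den_dvd p q
    exact_mod_cast Int.le_of_dvd hq this
  have hclose : |α - r| < 1 / (2 * (r.den : ℝ) ^ 2) := by
    have hden_pos : (0 : ℝ) < r.den := by exact_mod_cast r.pos
    calc |α - r| = |q * α - p| / q := by
          rw [hr, ← abs_of_pos hq', ← abs_div, abs_of_pos hq']
          congr 1
          field_simp
      _ < 1 / (2 * q) / q := by gcongr
      _ = 1 / (2 * q ^ 2) := by ring
      _ ≤ 1 / (2 * (r.den : ℝ) ^ 2) := by gcongr
  obtain ⟨n, hn⟩ := Real.exists_rat_eq_convergent hclose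
  exact h n (by rw [← hr, hn, convergent_eq_cfNum_div_cfDen n hα])

theorem notConvergent_floor_add_two (hα : InfiniteExpansion α) :
    NotConvergent α (⌊α⌋ + 2) 1 := by
  intro m hm
  have hq : (1 : ℝ) ≤ cfDen α m := by exact_mod_cast one_le_cfDen hα m
  have hq' : (1 : ℝ) ≤ cfDen α (m + 1) := by exact_mod_cast one_le_cfDen hα (m + 1)
  have hξ := cfXi_mul_cfDen_succ_le_one hα m
  have hp : (cfNum α m : ℝ) = (⌊α⌋ + 2) * cfDen α m := by
    field_simp at hm
    push_cast at hm
    linarith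
  have hξ_eq : cfXi α m = cfDen α m * (2 - Int.fract α) := by
    rw [cfXi, hp, show (cfDen α m : ℝ) * α - (⌊α⌋ + 2) * cfDen α m =
      -(cfDen α m * (2 - Int.fract α)) by rw [← Int.self_sub_floor]; ring, abs_neg,
      abs_of_pos (mul_pos (by linarith) (by linarith [Int.fract_lt_one α]))]
  nlinarith [Int.fract_lt_one α, cfXi_pos hα m]

theorem psi2sFn_le (α : ℝ) {p q : ℤ} {t : ℝ} (hq : 1 ≤ q) (hqt : (q : ℝ) ≤ t)
    (h : NotConvergent α p q) : psi2sFn α t ≤ |q * α - p| :=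
  csInf_le ⟨0, by rintro _ ⟨_, _, _, _, _, rfl⟩; exact abs_nonneg _⟩
    ⟨p, q, hq, hqt, h, rfl⟩

theorem one_div_two_le_mul_psi2sFn (hα : InfiniteExpansion α) {t : ℝ} (ht : 1 ≤ t) :
    1 / 2 ≤ t * psi2sFn α t := by
  have hψ : 1 / (2 * t) ≤ psi2sFn α t := by
    refine le_csInf ⟨_, ⌊α⌋ + 2, 1, le_rfl, by exact_mod_cast ht,
      notConvergent_floor_add_two hα, rfl⟩ ?_
    rintro _ ⟨p, q, hq, hqt, h, rfl⟩
    have hq' : (0 : ℝ) < q := by exact_mod_cast hq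
    calc 1 / (2 * t) ≤ 1 / (2 * q) := by gcongr
      _ ≤ _ := one_div_two_mul_le_abs_sub hα hq h
  calc (1 : ℝ) / 2 = t * (1 / (2 * t)) := by field_simp
    _ ≤ t * psi2sFn α t := by gcongr

end Approximation

section Semiconvergents

variable {α : ℝ}

noncomputable def semiNum (α : ℝ) (n : ℕ) (k : ℤ) : ℤ := cfNum α (n + 1) + k * cfNum α n

noncomputable def semiDen (α : ℝ) (n : ℕ) (k : ℤ) : ℤ := cfDen α (n + 1) + k * cfDen α n

theorem isCoprime_semiNum_semiDen (α : ℝ) (n : ℕ) (k : ℤ) :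
    IsCoprime (semiNum α n k) (semiDen α n k) :=
  isCoprime_of_mul_add_mul_eq_neg_one_pow (u := cfDen α n) (v := -cfNum α n) (by
    simp only [semiNum, semiDen]
    linear_combination cfNum_mul_cfDen_sub_cfNum_mul_cfDen α n)

theorem cfDen_eq_of_div_eq (hα : InfiniteExpansion α) {P Q : ℤ} (hPQ : IsCoprime P Q)
    (hQ : 0 < Q) {m : ℕ} (h : (P : ℝ) / Q = cfNum α m / cfDen α m) : Q = cfDen α m := by
  have hq := one_le_cfDen hα m
  have hcross : P * cfDen α m = cfNum α m * Q := by
    rw [div_eq_div_iff (by positivity) (by positivity)] at h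
    exact_mod_cast h
  refine Int.dvd_antisymm hQ.le (by omega) ?_ ?_
  · exact hPQ.symm.dvd_of_dvd_mul_left ⟨cfNum α m, hcross.trans (mul_comm _ _)⟩
  · exact (isCoprime_cfNum_cfDen α m).symm.dvd_of_dvd_mul_left
      ⟨P, hcross.symm.trans (mul_comm _ _)⟩

theorem notConvergent_of_cfDen_lt_of_lt (hα : InfiniteExpansion α) {P Q : ℤ}
    (hPQ : IsCoprime P Q) {k : ℕ} (h₁ : cfDen α k < Q) (h₂ : Q < cfDen α (k + 1)) :
    NotConvergent α P Q := by
  intro m hm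
  have hQ := cfDen_eq_of_div_eq hα hPQ (by linarith [one_le_cfDen hα k]) hm
  rw [hQ] at h₁ h₂
  have := (cfDen_mono hα).reflect_lt h₁
  have := (cfDen_mono hα).reflect_lt h₂
  omega

theorem notConvergent_semi_one_of_two_le_cfA (hα : InfiniteExpansion α) {n : ℕ}
    (ha : 2 ≤ cfA α (n + 2)) :
    NotConvergent α (semiNum α n 1) (semiDen α n 1) := by
  have := one_le_cfDen hα n
  have := one_le_cfDen hα (n + 1)
  refine notConvergent_of_cfDen_lt_of_lt hα (isCoprime_semiNum_semiDen α n 1) (k := n + 1) ?_ ?_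
  · rw [semiDen]
    linarith
  · rw [semiDen, cfDen_add_two]
    nlinarith

theorem notConvergent_semi_two_of_cfA_eq_one (hα : InfiniteExpansion α) {n : ℕ} (hn : n ≠ 0)
    (ha : cfA α (n + 2) = 1) : NotConvergent α (semiNum α n 2) (semiDen α n 2) := by
  have h₂ : cfDen α (n + 2) = cfDen α (n + 1) + cfDen α n := by
    rw [cfDen_add_two, ha, one_mul]
  have := one_le_cfDen hα n
  have := cfDen_add_cfDen_le hα (n + 1)
  have := cfDen_lt_cfDen_succ hα hn
  refine notConvergent_of_cfDen_lt_of_lt hα (isCoprime_semiNum_semiDen α n 2) (k := n + 2) ?_ ?_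
  · rw [semiDen, h₂]
    linarith
  · rw [semiDen]
    linarith

theorem semiDen_mul_sub_semiNum (α : ℝ) (n : ℕ) (k : ℤ) :
    (semiDen α n k : ℝ) * α - semiNum α n k = cfErr α (n + 2) + k * cfErr α (n + 1) := by
  simp only [semiDen, semiNum, cfErr, cfDen, cfNum]
  push_cast
  ring

theorem abs_semiDen_mul_sub_semiNum_le (α : ℝ) (n : ℕ) {k : ℤ} (hk : 0 ≤ k) :
    |(semiDen α n k : ℝ) * α - semiNum α n k| ≤ cfXi α (n + 1) + k * cfXi α n := by
  rw [semiDen_mul_sub_semiNum, cfXi_eq_abs_cfErr, cfXi_eq_abs_cfErr]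
  calc _ ≤ |cfErr α (n + 2)| + |k * cfErr α (n + 1)| := abs_add_le _ _
    _ = _ := by rw [abs_mul, abs_of_nonneg (a := (k : ℝ)) (by exact_mod_cast hk)]

theorem semiDen_mul_abs_sub_le (hα : InfiniteExpansion α) (n : ℕ) {k : ℤ} (hk : 0 ≤ k) :
    semiDen α n k * |(semiDen α n k : ℝ) * α - semiNum α n k| ≤ (k + 1) ^ 2 := by
  have hE := abs_semiDen_mul_sub_semiNum_le α n hk
  set E := |(semiDen α n k : ℝ) * α - semiNum α n k|
  have hk' : (0 : ℝ) ≤ k := by exact_mod_cast hk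
  have hq₀ : (0 : ℝ) ≤ cfDen α n := by exact_mod_cast zero_le_one.trans (one_le_cfDen hα n)
  have hq₀₁ : (cfDen α n : ℝ) ≤ cfDen α (n + 1) := by
    exact_mod_cast cfDen_mono hα n.le_succ
  have hq₁₂ : (cfDen α (n + 1) : ℝ) ≤ cfDen α (n + 2) := by
    exact_mod_cast cfDen_mono hα (n + 1).le_succ
  have hξ₀ := cfXi_mul_cfDen_succ_le_one hα n
  have hξ₁ : cfXi α (n + 1) * cfDen α (n + 2) ≤ 1 := cfXi_mul_cfDen_succ_le_one hα (n + 1)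
  have := (cfXi_pos hα (n + 1)).le
  have hqE : cfDen α (n + 1) * E ≤ k + 1 := by
    nlinarith [mul_le_mul_of_nonneg_left hE (hq₀₁.trans' hq₀),
      mul_le_mul_of_nonneg_right hq₁₂ this, mul_le_mul_of_nonneg_left hξ₀ hk']
  have hQ : (semiDen α n k : ℝ) ≤ (k + 1) * cfDen α (n + 1) := by
    rw [semiDen]
    push_cast
    nlinarith
  calc semiDen α n k * E ≤ (k + 1) * cfDen α (n + 1) * E := by gcongr
    _ = (k + 1) * (cfDen α (n + 1) * E) := by ring
    _ ≤ (k + 1) * (k + 1) := by gcongr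
    _ = (k + 1) ^ 2 := by ring

theorem exists_notConvergent_mul_abs_sub_le (hα : InfiniteExpansion α) (n : ℕ) :
    ∃ p q : ℤ, cfDen α n ≤ q ∧ NotConvergent α p q ∧ q * |q * α - p| ≤ 9 := by
  have hq : ∀ k : ℤ, 0 ≤ k → cfDen α n ≤ semiDen α (n + 1) k := fun k hk => by
    have := cfDen_mono hα (n.le_succ.trans (n + 1).le_succ)
    have := one_le_cfDen hα (n + 1)
    rw [semiDen]
    nlinarith
  rcases (one_le_cfA_succ hα (n + 2)).eq_or_lt with ha | ha
  · refine ⟨_, _, hq 2 (by norm_num),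
      notConvergent_semi_two_of_cfA_eq_one hα n.succ_ne_zero ha.symm, ?_⟩
    have := semiDen_mul_abs_sub_le hα (n + 1) (k := 2) (by norm_num)
    norm_num at this ⊢
    exact this
  · refine ⟨_, _, hq 1 (by norm_num), notConvergent_semi_one_of_two_le_cfA hα ha, ?_⟩
    have := semiDen_mul_abs_sub_le hα (n + 1) (k := 1) (by norm_num)
    norm_num at this ⊢
    linarith

theorem semiDen_one_mul_abs_sub_le (hα : InfiniteExpansion α) {n : ℕ} (ha : cfA α (n + 2) = 2)
    {M : ℝ} (hM : 0 < M) (h₁ : M ≤ cfA α (n + 1)) (h₃ : M ≤ cfA α (n + 3)) :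
    semiDen α n 1 * |(semiDen α n 1 : ℝ) * α - semiNum α n 1| ≤ 1 / 2 + 2 / M := by
  have hQ : (semiDen α n 1 : ℝ) = cfDen α (n + 1) + cfDen α n := by simp [semiDen]
  have hz : (cfDen α (n + 2) : ℝ) = 2 * cfDen α (n + 1) + cfDen α n := by
    rw [cfDen_add_two, ha]; push_cast; ring
  -- `a_{n+2} = 2` turns the error `e_{n+1} + e_n` of the mediant into `e_{n+2} - e_{n+1}`
  have hE :
      |(semiDen α n 1 : ℝ) * α - semiNum α n 1| ≤ cfXi α (n + 1) + cfXi α (n + 2) := by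
    have h := cfErr_add_two α (n + 1)
    rw [ha] at h
    push_cast at h
    rw [semiDen_mul_sub_semiNum, Int.cast_one, one_mul, cfXi_eq_abs_cfErr, cfXi_eq_abs_cfErr,
      show cfErr α (n + 2) + cfErr α (n + 1) = cfErr α (n + 3) + -cfErr α (n + 2) by linarith,
      add_comm (|cfErr α (n + 2)|), ← abs_neg (cfErr α (n + 2))]
    exact abs_add_le _ _
  have hx : (0 : ℝ) ≤ cfDen α n := by exact_mod_cast zero_le_one.trans (one_le_cfDen hα n)
  have hy : (0 : ℝ) ≤ cfDen α (n + 1) := by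
    exact_mod_cast zero_le_one.trans (one_le_cfDen hα (n + 1))
  have hξ₁ := (cfXi_pos hα (n + 1)).le
  have hξ₂ := (cfXi_pos hα (n + 2)).le
  have hξ₁z : cfXi α (n + 1) * cfDen α (n + 2) ≤ 1 := cfXi_mul_cfDen_succ_le_one hα (n + 1)
  have hxξ : cfDen α n * cfXi α (n + 1) * M ≤ 1 := by
    have h : (cfA α (n + 1) : ℝ) * cfDen α n ≤ cfDen α (n + 1) := by
      exact_mod_cast cfA_mul_cfDen_le hα n
    nlinarith [mul_le_mul_of_nonneg_left h₁ (mul_nonneg hx hξ₁),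
      mul_le_mul_of_nonneg_right h hξ₁]
  have hzξ : cfDen α (n + 2) * cfXi α (n + 2) * M ≤ 1 := by
    have h : (cfA α (n + 3) : ℝ) * cfDen α (n + 2) ≤ cfDen α (n + 3) := by
      exact_mod_cast cfA_mul_cfDen_le hα (n + 2)
    have hξ : cfXi α (n + 2) * cfDen α (n + 3) ≤ 1 := cfXi_mul_cfDen_succ_le_one hα (n + 2)
    have hz : (0 : ℝ) ≤ cfDen α (n + 2) := by linarith
    nlinarith [mul_le_mul_of_nonneg_left h₃ (mul_nonneg hz hξ₂),
      mul_le_mul_of_nonneg_right h hξ₂]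
  have hsplit : ((cfDen α (n + 1) + cfDen α n : ℝ) * (cfXi α (n + 1) + cfXi α (n + 2)))
      ≤ 1 / 2 + cfDen α n * cfXi α (n + 1) / 2 + cfDen α (n + 2) * cfXi α (n + 2) := by
    nlinarith
  have key : (cfDen α n * cfXi α (n + 1) / 2 + cfDen α (n + 2) * cfXi α (n + 2)) ≤ 2 / M := by
    rw [le_div_iff₀ hM]
    linarith
  rw [hQ]
  calc _ ≤ ((cfDen α (n + 1) + cfDen α n : ℝ) * (cfXi α (n + 1) + cfXi α (n + 2))) := by
        gcongr
        rwa [← hQ]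
    _ ≤ 1 / 2 + 2 / M := by linarith

end Semiconvergents

section Spectrum

variable {α : ℝ}

theorem frequently_mul_psi2sFn_le (hα : InfiniteExpansion α) {C : ℝ}
    (h : ∀ n : ℕ, ∃ p q : ℤ,
      cfDen α n ≤ q ∧ NotConvergent α p q ∧ q * |q * α - p| ≤ C) :
    ∃ᶠ t in atTop, t * psi2sFn α t ≤ C := by
  refine frequently_atTop.mpr fun N => ?_
  obtain ⟨p, q, hq, hpq, hC⟩ := h ⌈N⌉₊
  have hq₁ : 1 ≤ q := (one_le_cfDen hα _).trans hq
  have hNq : N ≤ q := (Nat.le_ceil N).trans (by exact_mod_cast (le_cfDen hα _).trans hq)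
  refine ⟨q, hNq, ?_⟩
  calc (q : ℝ) * psi2sFn α q ≤ q * |q * α - p| := by
        have : (0 : ℝ) ≤ q := by exact_mod_cast zero_le_one.trans hq₁
        gcongr
        exact psi2sFn_le α hq₁ le_rfl hpq
    _ ≤ C := hC

theorem eventually_half_le_mul_psi2sFn (hα : InfiniteExpansion α) :
    ∀ᶠ t in atTop, 1 / 2 ≤ t * psi2sFn α t :=
  (eventually_ge_atTop 1).mono fun _ ht => one_div_two_le_mul_psi2sFn hα ht

theorem half_le_ksOf (hα : InfiniteExpansion α) : 1 / 2 ≤ ksOf α :=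
  le_liminf_of_le (IsCoboundedUnder.of_frequently_le
    (frequently_mul_psi2sFn_le hα (exists_notConvergent_mul_abs_sub_le hα)))
    (eventually_half_le_mul_psi2sFn hα)

theorem ksOf_eq_half (hα : InfiniteExpansion α)
    (h : ∀ (M : ℝ) (N : ℕ), ∃ n ≥ N,
      cfA α (n + 2) = 2 ∧ M ≤ cfA α (n + 1) ∧ M ≤ cfA α (n + 3)) :
    ksOf α = 1 / 2 := by
  refine le_antisymm (le_of_forall_pos_le_add fun ε hε => ?_) (half_le_ksOf hα)
  have hfreq : ∃ᶠ t in atTop, t * psi2sFn α t ≤ 1 / 2 + ε := by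
    refine frequently_mul_psi2sFn_le hα fun N => ?_
    obtain ⟨n, hn, ha, h₁, h₃⟩ := h (2 / ε) N
    refine ⟨_, _, ?_, notConvergent_semi_one_of_two_le_cfA hα ha.ge, ?_⟩
    · have := cfDen_mono hα (hn.trans n.le_succ)
      have := one_le_cfDen hα n
      rw [semiDen]
      linarith
    · have hε' : 2 / (2 / ε) = ε := by field_simp
      simpa [hε'] using semiDen_one_mul_abs_sub_le hα ha (by positivity) h₁ h₃
  exact liminf_le_of_frequently_le hfreq
    (isBoundedUnder_of_eventually_ge (eventually_half_le_mul_psi2sFn hα))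

end Spectrum

theorem InfiniteExpansion.irrational {α : ℝ} (hα : InfiniteExpansion α) : Irrational α := by
  rintro ⟨r, rfl⟩
  set n := r.den
  have hd : (0 : ℝ) < n := by exact_mod_cast r.pos
  have hint : cfXi r n * n = |((cfDen r n * r.num - cfNum r n * n : ℤ) : ℝ)| := by
    have hr : (r : ℝ) * n = r.num := by exact_mod_cast Rat.mul_den_eq_num r
    rw [cfXi, ← abs_of_pos hd, ← abs_mul]
    congr 1
    push_cast
    linear_combination (cfDen r n : ℝ) * hr
  have hne : cfDen r n * r.num - cfNum r n * n ≠ 0 := by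
    rintro h
    rw [h, Int.cast_zero, abs_zero] at hint
    exact (mul_pos (cfXi_pos hα n) hd).ne' hint
  have h₁ : (1 : ℝ) ≤ cfXi r n * n := by
    rw [hint]
    exact_mod_cast Int.one_le_abs hne
  have h₂ : (n : ℝ) + 1 ≤ cfDen r (n + 1) := by exact_mod_cast le_cfDen hα (n + 1)
  have := cfXi_mul_cfDen_succ_le_one hα n
  nlinarith [cfXi_pos hα n]

section Construction

variable {b : ℕ → ℤ}

/-- `finiteCF b m k = [b k; b (k + 1), …, b (k + m)]`. -/
noncomputable def finiteCF (b : ℕ → ℤ) : ℕ → ℕ → ℝ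
  | 0, k => b k
  | m + 1, k => b k + (finiteCF b m (k + 1))⁻¹

theorem two_le_finiteCF (hb : ∀ n, 2 ≤ b n) : ∀ m k, 2 ≤ finiteCF b m k
  | 0, k => show (2 : ℝ) ≤ b k by exact_mod_cast hb k
  | m + 1, k => by
    have : (2 : ℝ) ≤ b k := by exact_mod_cast hb k
    have : 0 < (finiteCF b m (k + 1))⁻¹ :=
      inv_pos.mpr (by linarith [two_le_finiteCF hb m (k + 1)])
    show 2 ≤ (b k : ℝ) + _
    linarith

-- Since all `b n ≥ 2`, `x ↦ b k + x⁻¹` contracts by a factor `1 / 4` on `[2, ∞)`.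
theorem dist_finiteCF_succ_le (hb : ∀ n, 2 ≤ b n) :
    ∀ m k, dist (finiteCF b m k) (finiteCF b (m + 1) k) ≤ 1 / 2 * (1 / 4) ^ m
  | 0, k => by
    have h := two_le_finiteCF hb 0 (k + 1)
    show dist (b k : ℝ) (b k + (finiteCF b 0 (k + 1))⁻¹) ≤ _
    rw [dist_self_add_right, Real.norm_eq_abs, abs_of_pos (inv_pos.mpr (by linarith))]
    simpa using inv_anti₀ two_pos h
  | m + 1, k => by
    have h₀ := two_le_finiteCF hb m (k + 1)
    have h₁ := two_le_finiteCF hb (m + 1) (k + 1)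
    have ih := dist_finiteCF_succ_le hb m (k + 1)
    show dist ((b k : ℝ) + (finiteCF b m (k + 1))⁻¹)
      (b k + (finiteCF b (m + 1) (k + 1))⁻¹) ≤ _
    rw [dist_add_left, dist_inv_inv₀ (by positivity) (by positivity), Real.norm_eq_abs,
      Real.norm_eq_abs, abs_of_pos (by positivity), abs_of_pos (by positivity),
      div_le_iff₀ (by positivity)]
    calc _ ≤ 1 / 2 * (1 / 4 : ℝ) ^ m := ih
      _ = 1 / 2 * (1 / 4) ^ (m + 1) * (2 * 2) := by ring
      _ ≤ _ := by gcongr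

noncomputable def cfTail (b : ℕ → ℤ) (k : ℕ) : ℝ := limUnder atTop fun m => finiteCF b m k

theorem tendsto_finiteCF (hb : ∀ n, 2 ≤ b n) (k : ℕ) :
    Tendsto (fun m => finiteCF b m k) atTop (nhds (cfTail b k)) :=
  (cauchySeq_of_le_geometric _ _ (by norm_num) fun m =>
    dist_finiteCF_succ_le hb m k).tendsto_limUnder

theorem two_le_cfTail (hb : ∀ n, 2 ≤ b n) (k : ℕ) : 2 ≤ cfTail b k :=
  ge_of_tendsto' (tendsto_finiteCF hb k) fun m => two_le_finiteCF hb m k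

theorem cfTail_eq (hb : ∀ n, 2 ≤ b n) (k : ℕ) : cfTail b k = b k + (cfTail b (k + 1))⁻¹ :=
  tendsto_nhds_unique ((tendsto_finiteCF hb k).comp (tendsto_add_atTop_nat 1))
    (tendsto_const_nhds.add ((tendsto_finiteCF hb (k + 1)).inv₀
      (by linarith [two_le_cfTail hb (k + 1)])))

theorem floor_cfTail_and_fract_cfTail (hb : ∀ n, 2 ≤ b n) (k : ℕ) :
    ⌊cfTail b k⌋ = b k ∧ Int.fract (cfTail b k) = (cfTail b (k + 1))⁻¹ := by
  have h := two_le_cfTail hb (k + 1)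
  have h₀ : 0 < (cfTail b (k + 1))⁻¹ := inv_pos.mpr (by linarith)
  have h₁ : (cfTail b (k + 1))⁻¹ < 1 := inv_lt_one_of_one_lt₀ (by linarith)
  have hfloor : ⌊cfTail b k⌋ = b k := by
    rw [Int.floor_eq_iff, cfTail_eq hb k]
    constructor <;> linarith
  refine ⟨hfloor, ?_⟩
  rw [← Int.self_sub_floor, hfloor, cfTail_eq hb k]
  ring

theorem gaussIter_cfTail (hb : ∀ n, 2 ≤ b n) : ∀ n, gaussIter (cfTail b 0) n = cfTail b n
  | 0 => rfl
  | n + 1 => by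
    rw [gaussIter_succ, gaussIter_cfTail hb n, (floor_cfTail_and_fract_cfTail hb n).2, inv_inv]

theorem exists_infiniteExpansion_cfA_eq (hb : ∀ n, 2 ≤ b n) :
    ∃ x : ℝ, InfiniteExpansion x ∧ ∀ n, cfA x n = b n := by
  refine ⟨cfTail b 0, fun n => ?_, fun n => ?_⟩
  · rw [gaussIter_cfTail hb, (floor_cfTail_and_fract_cfTail hb n).2]
    exact (inv_pos.mpr (by linarith [two_le_cfTail hb (n + 1)])).ne'
  · rw [cfA, gaussIter_cfTail hb, (floor_cfTail_and_fract_cfTail hb n).1]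

end Construction

theorem exists_irrational_ksOf_eq_half : ∃ β : ℝ, Irrational β ∧ ksOf β = 1 / 2 := by
  obtain ⟨β, hβ, hcf⟩ := exists_infiniteExpansion_cfA_eq
    (b := fun n => if Even n then 2 else n + 1) fun n => by
      split_ifs with h
      · exact le_rfl
      · have : n ≠ 0 := by rintro rfl; exact h (by decide)
        omega
  refine ⟨β, hβ.irrational,
    ksOf_eq_half hβ fun M N => ⟨2 * (N + ⌈M⌉₊), by omega, ?_, ?_, ?_⟩⟩
  · simp [hcf, Nat.even_add_one]
  · simp only [hcf, Nat.even_add_one, even_two_mul, not_true_eq_false, if_false]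
    push_cast
    linarith [Nat.le_ceil M, (N.cast_nonneg : (0 : ℝ) ≤ N)]
  · simp only [hcf, Nat.even_add_one, even_two_mul, not_true_eq_false, not_false_eq_true,
      if_false]
    push_cast
    linarith [Nat.le_ceil M, (N.cast_nonneg : (0 : ℝ) ≤ N)]

/-- For every irrational `α` one has `𝔨*(α) ≥ 1/2`, and there exists an
irrational `β` with `𝔨*(β) = 1/2`; in particular `1/2` is the minimal element of `𝕃₂*`. -/
theorem stmt9 :
    (∀ α : ℝ, Irrational α → (1 : ℝ) / 2 ≤ ksOf α) ∧
    (∃ β : ℝ, Irrational β ∧ ksOf β = 1 / 2) ∧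
    IsLeast L2s (1 / 2) := by
  have hge : ∀ α : ℝ, Irrational α → (1 : ℝ) / 2 ≤ ksOf α := fun α hα =>
    half_le_ksOf hα.infiniteExpansion
  obtain ⟨β, hβ, hβ_half⟩ := exists_irrational_ksOf_eq_half
  refine ⟨hge, ⟨β, hβ, hβ_half⟩, ⟨β, hβ, hβ_half⟩, ?_⟩
  rintro _ ⟨α, hα, rfl⟩
  exact hge α hα
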